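/- arXiv:1002.3658 — 6 statements merged into one kernel-verified Lean document; each statement's English description precedes it below -/
import Mathlib

section
/- Let p(x) ∈ ℤ[x] have positive leading coefficient. Then there exist a nonnegative integer d, integer-coefficient linear functions c_0(n), …, c_d(n) (each of the form αn + β with α, β ∈ ℤ), and an integer N such that for all n ≥ N: p(n) = c_d(n)·n^d + ⋯ + c_1(n)·n + c_0(n), with 0 ≤ c_i(n) ≤ n − 1 for all 0 ≤ i ≤ d and 0 < c_d(n) ≤ n − 1. Moreover, for each such n this representation of p(n) in base n is unique. -/
/-!
Subtract the coefficients `a_i` of `p` from the bottom up with borrowing: with `b_0 = 0` and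
`b_{i+1} = 1` exactly when `a_i - b_i < 0`, the `i`-th digit is `b_{i+1} n + (a_i - b_i)`.
The borrows do not depend on `n`, so each digit is linear in `n`, and once `n` exceeds every
`|a_i - b_i|` it lies in `[0, n - 1]`. The borrows telescope away, and since the leading
coefficient is positive no borrow leaves the top place; the top digit vanishes only when
`a_D = b_D = 1`, and then the digit below it is positive. Uniqueness is that of `Nat.digits`.
-/

open Finset

theorem Nat.ofDigits_map_range (b : ℕ) (e : ℕ → ℕ) (m : ℕ) :
    Nat.ofDigits b ((List.range m).map e) = ∑ i ∈ range m, e i * b ^ i := by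
  induction m with
  | zero => rfl
  | succ m ih =>
    rw [List.range_succ, List.map_append, Nat.ofDigits_append, ih, sum_range_succ,
      List.map_singleton, Nat.ofDigits_singleton, List.length_map, List.length_range, mul_comm]

theorem Nat.digits_sum_range {b : ℕ} (hb : 1 < b) {d : ℕ} {e : ℕ → ℕ}
    (he : ∀ i ≤ d, e i < b) (hed : e d ≠ 0) :
    b.digits (∑ i ∈ range (d + 1), e i * b ^ i) = (List.range (d + 1)).map e := by
  rw [← Nat.ofDigits_map_range]
  refine Nat.digits_ofDigits b hb _ ?_ fun _ => ?_
  · simpa [Nat.lt_succ_iff] using he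
  · simpa [List.getLast_map, List.getLast_range] using hed

theorem Nat.digits_toNat_sum_range {b d : ℕ} {e : ℕ → ℤ} (hb : 1 < b)
    (he : ∀ i ≤ d, 0 ≤ e i ∧ e i ≤ b - 1) (hed : 0 < e d) :
    b.digits (∑ i ∈ range (d + 1), e i * (b : ℤ) ^ i).toNat
      = (List.range (d + 1)).map fun i => (e i).toNat := by
  have hcast : ∑ i ∈ range (d + 1), e i * (b : ℤ) ^ i
      = ((∑ i ∈ range (d + 1), (e i).toNat * b ^ i : ℕ) : ℤ) := by
    push_cast
    refine sum_congr rfl fun i hi => ?_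
    rw [Int.toNat_of_nonneg (he i (Nat.lt_succ_iff.mp (mem_range.mp hi))).1]
  rw [hcast, Int.toNat_natCast]
  exact Nat.digits_sum_range hb (fun i hi => by have := he i hi; omega) (by omega)

theorem base_expansion_unique {n : ℤ} (hn : 2 ≤ n) {d d' : ℕ} {e f : ℕ → ℤ}
    (he : ∀ i ≤ d, 0 ≤ e i ∧ e i ≤ n - 1) (hf : ∀ i ≤ d', 0 ≤ f i ∧ f i ≤ n - 1)
    (hed : 0 < e d) (hfd : 0 < f d')
    (h : ∑ i ∈ range (d + 1), e i * n ^ i = ∑ i ∈ range (d' + 1), f i * n ^ i) :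
    d = d' ∧ ∀ i ≤ d, e i = f i := by
  lift n to ℕ using by omega
  have hlist := congrArg (fun m => n.digits m.toNat) h
  simp only [Nat.digits_toNat_sum_range (by omega) he hed,
    Nat.digits_toNat_sum_range (by omega) hf hfd] at hlist
  obtain rfl : d = d' := by simpa using congrArg List.length hlist
  refine ⟨rfl, fun i hi => ?_⟩
  have hi' := congrArg (·[i]?) hlist
  simp only [List.getElem?_map, List.getElem?_range (Nat.lt_succ_of_le hi), Option.map_some,
    Option.some.injEq] at hi'
  rw [← Int.toNat_of_nonneg (he i hi).1, ← Int.toNat_of_nonneg (hf i hi).1, hi']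

def borrow (a : ℕ → ℤ) : ℕ → ℤ
  | 0 => 0
  | i + 1 => if a i - borrow a i < 0 then 1 else 0

def borrowDigit (a : ℕ → ℤ) (n : ℤ) (i : ℕ) : ℤ := borrow a (i + 1) * n + (a i - borrow a i)

section Borrow

variable (a : ℕ → ℤ)

theorem borrow_zero : borrow a 0 = 0 := rfl

theorem borrow_succ_of_neg {i : ℕ} (h : a i - borrow a i < 0) : borrow a (i + 1) = 1 :=
  if_pos h

theorem borrow_succ_of_nonneg {i : ℕ} (h : 0 ≤ a i - borrow a i) : borrow a (i + 1) = 0 :=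
  if_neg (not_lt.mpr h)

theorem borrow_eq_zero_or_one (i : ℕ) : borrow a i = 0 ∨ borrow a i = 1 := by
  cases i with
  | zero => exact Or.inl rfl
  | succ i => unfold borrow; split <;> simp

theorem sum_borrowDigit_mul_pow (n : ℤ) (m : ℕ) :
    ∑ i ∈ range m, borrowDigit a n i * n ^ i
      = ∑ i ∈ range m, a i * n ^ i + borrow a m * n ^ m := by
  induction m with
  | zero => simp [borrow_zero]
  | succ m ih =>
    rw [sum_range_succ, sum_range_succ, ih, borrowDigit]
    ring

theorem borrowDigit_mem {n : ℤ} {i : ℕ} (h : |a i - borrow a i| < n) :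
    0 ≤ borrowDigit a n i ∧ borrowDigit a n i ≤ n - 1 := by
  unfold borrowDigit
  rcases lt_or_ge (a i - borrow a i) 0 with hneg | hnonneg
  · rw [borrow_succ_of_neg a hneg, abs_of_neg hneg] at *
    constructor <;> linarith
  · rw [borrow_succ_of_nonneg a hnonneg, abs_of_nonneg hnonneg] at *
    constructor <;> linarith

theorem borrowDigit_pos_of_neg {n : ℤ} {i : ℕ} (h : |a i - borrow a i| < n)
    (hneg : a i - borrow a i < 0) : 0 < borrowDigit a n i := by
  rw [borrowDigit, borrow_succ_of_neg a hneg]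
  rw [abs_of_neg hneg] at h
  linarith

theorem exists_leading_borrowDigit {D : ℕ} (haD : 0 < a D) :
    ∃ d ≤ D, ∀ n : ℤ, (∀ i ≤ D, |a i - borrow a i| < n) →
      ∑ i ∈ range (D + 1), a i * n ^ i = ∑ i ∈ range (d + 1), borrowDigit a n i * n ^ i ∧
        0 < borrowDigit a n d := by
  rcases lt_or_ge 0 (a D - borrow a D) with hpos | hle
  · have hcarry := borrow_succ_of_nonneg a hpos.le
    refine ⟨D, le_rfl, fun n _ => ⟨?_, ?_⟩⟩
    · simp [sum_borrowDigit_mul_pow, hcarry]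
    · simpa [borrowDigit, hcarry] using hpos
  -- otherwise `a D = 1` and the borrow into place `D` cancels it
  have hbD : borrow a D = 1 := by rcases borrow_eq_zero_or_one a D with h | h <;> omega
  obtain ⟨d, rfl⟩ : ∃ d, D = d + 1 :=
    Nat.exists_eq_succ_of_ne_zero (by rintro rfl; simp [borrow_zero] at hbD)
  have hneg : a d - borrow a d < 0 := by
    by_contra! h
    rw [borrow_succ_of_nonneg a h] at hbD
    exact zero_ne_one hbD
  refine ⟨d, d.le_succ, fun n hn => ⟨?_, borrowDigit_pos_of_neg a (hn d d.le_succ) hneg⟩⟩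
  rw [sum_range_succ, sum_borrowDigit_mul_pow, hbD, (by omega : a (d + 1) = 1)]

end Borrow

/-- Representation of `p(n)` in base `n` with linear-function digits, together with
uniqueness of base-`n` digits for each sufficiently large `n`. -/
theorem stmt3 (p : Polynomial ℤ) (hp : 0 < p.leadingCoeff) :
    ∃ (d : ℕ) (α β : ℕ → ℤ) (N : ℤ),
      ∀ n : ℤ, N ≤ n →
        (p.eval n = ∑ i ∈ Finset.range (d + 1), (α i * n + β i) * n ^ i) ∧
        (∀ i ≤ d, 0 ≤ α i * n + β i ∧ α i * n + β i ≤ n - 1) ∧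
        (0 < α d * n + β d) ∧
        -- uniqueness of the base-`n` representation of `p(n)` for each such `n`
        (∀ (d' : ℕ) (e : ℕ → ℤ),
          (∀ i ≤ d', 0 ≤ e i ∧ e i ≤ n - 1) → 0 < e d' →
          (∑ i ∈ Finset.range (d' + 1), e i * n ^ i) = p.eval n →
          d' = d ∧ ∀ i ≤ d, e i = α i * n + β i) := by
  set a := p.coeff
  set D := p.natDegree
  obtain ⟨d, hdD, hrepr⟩ := exists_leading_borrowDigit a hp
  refine ⟨d, fun i => borrow a (i + 1), fun i => a i - borrow a i,
    1 + ∑ i ∈ range (D + 1), |a i - borrow a i|, fun n hn => ?_⟩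
  have hbound : ∀ i ≤ D, |a i - borrow a i| < n := fun i hi => by
    have := single_le_sum (fun j _ => abs_nonneg (a j - borrow a j))
      (mem_range.mpr (Nat.lt_succ_of_le hi))
    linarith
  obtain ⟨hsum, hlead⟩ := hrepr n hbound
  have hdigits : ∀ i ≤ d, 0 ≤ borrowDigit a n i ∧ borrowDigit a n i ≤ n - 1 :=
    fun i hi => borrowDigit_mem a (hbound i (hi.trans hdD))
  have heval : p.eval n = ∑ i ∈ range (d + 1), borrowDigit a n i * n ^ i := by
    rw [Polynomial.eval_eq_sum_range, hsum]
  refine ⟨heval, hdigits, hlead, fun d' e he hed hsum' => ?_⟩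
  have hn : 2 ≤ n := by linarith [(hdigits d le_rfl).2]
  obtain ⟨rfl, heq⟩ := base_expansion_unique hn he hdigits hed hlead (hsum'.trans heval)
  exact ⟨rfl, heq⟩
end

section
/- Let a_1(x), …, a_k(x), m(x) ∈ ℤ[x] with m having positive leading coefficient, and fix a nonnegative integer N. For a positive integer n set S_1(n) = {(x_1, …, x_k) ∈ ℤ^k : 0 ≤ x_i < n^{N+1} for all i, and a_1(n)x_1 + ⋯ + a_k(n)x_k = m(n)}. Then there exist finitely many finite systems of constraints, each system consisting of equations of the form An + B = f(x) where A, B ∈ ℤ and f is a linear form with constant integer coefficients in the k(N+1) variables x_{ij} (1 ≤ i ≤ k, 0 ≤ j ≤ N), such that for all sufficiently large n, the cardinality of S_1(n) equals the sum over these systems of the number of integer solutions (x_{ij}) with 0 ≤ x_{ij} < n satisfying all equations of the system. -/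
/-!
Write each unknown in base `n`, `x_i = ∑_j y_ij n^j` with digits `0 ≤ y_ij < n`. The equation
becomes `P_y(n) = 0` for `P_y = ∑_ij y_ij a_i X^j - m`, whose coefficients are linear forms in the
digits of size `O(n)`. Then `P_y = (X - n) Q`, and comparing coefficients from the bottom shows that
the coefficients of `Q` (the carries of the base-`n` computation) are bounded independently of `n`.
So `Q` ranges over a finite set fixed in advance, distinct `Q` give disjoint sets of digits, and for
each `Q` the identity `P_y = (X - n) Q` is the system
`-q_e n + (q_(e-1) + m_e) = ∑_ij (a_i X^j)_e y_ij`.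
-/

open Polynomial Finset

namespace Polynomial

variable {R : Type*} [CommRing R] [LinearOrder R] [IsStrictOrderedRing R]

theorem abs_coeff_le_of_eq_X_sub_C_mul {P Q : R[X]} {n B : R} (hn : 0 < n) (hB : 0 ≤ B)
    (hPQ : P = (X - C n) * Q) (hP : ∀ i, |P.coeff i| ≤ B * (n - 1)) (i : ℕ) :
    |Q.coeff i| ≤ B := by
  refine le_of_mul_le_mul_right ?_ hn
  induction i with
  | zero =>
    have hP0 : P.coeff 0 = -(n * Q.coeff 0) := by simp [hPQ, sub_mul]
    calc |Q.coeff 0| * n = |P.coeff 0| := by rw [hP0, abs_neg, abs_mul, abs_of_pos hn, mul_comm]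
      _ ≤ B * n := by linarith [hP 0]
  | succ i ih =>
    have hPi : n * Q.coeff (i + 1) = Q.coeff i - P.coeff (i + 1) := by
      rw [hPQ, coeff_X_sub_C_mul]; ring
    have hQi : |Q.coeff i| ≤ B := le_of_mul_le_mul_right ih hn
    calc |Q.coeff (i + 1)| * n = |Q.coeff i - P.coeff (i + 1)| := by
          rw [← hPi, abs_mul, abs_of_pos hn, mul_comm]
      _ ≤ |Q.coeff i| + |P.coeff (i + 1)| := abs_sub _ _
      _ ≤ B * n := by linarith [hP (i + 1)]

noncomputable def absCoeffSum (p : R[X]) : R := p.sum fun _ c => |c|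

theorem abs_coeff_le_absCoeffSum (p : R[X]) (i : ℕ) : |p.coeff i| ≤ absCoeffSum p := by
  by_cases hi : i ∈ p.support
  · exact single_le_sum (f := fun i => |p.coeff i|) (fun _ _ => abs_nonneg _) hi
  · rw [notMem_support_iff.1 hi, abs_zero]
    exact sum_nonneg fun _ _ => abs_nonneg _

theorem absCoeffSum_nonneg (p : R[X]) : 0 ≤ absCoeffSum p :=
  (abs_nonneg _).trans (abs_coeff_le_absCoeffSum p 0)

end Polynomial

noncomputable def boundedPolynomials (D : ℕ) (B : ℤ) : Finset ℤ[X] :=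
  (Fintype.piFinset fun _ : Fin (D + 1) => Icc (-B) B).image
    fun v => ∑ i : Fin (D + 1), monomial (i : ℕ) (v i)

theorem mem_boundedPolynomials {D : ℕ} {B : ℤ} {Q : ℤ[X]} (hQ : Q.natDegree ≤ D)
    (hB : ∀ i, |Q.coeff i| ≤ B) : Q ∈ boundedPolynomials D B := by
  refine mem_image.2 ⟨fun i => Q.coeff i,
    Fintype.mem_piFinset.2 fun i => mem_Icc.2 (abs_le.1 (hB i)), ?_⟩
  rw [Fin.sum_univ_eq_sum_range (fun i => monomial i (Q.coeff i)),
    ← as_sum_range' Q (D + 1) (by omega)]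

theorem natDegree_le_of_mem_boundedPolynomials {D : ℕ} {B : ℤ} {Q : ℤ[X]}
    (hQ : Q ∈ boundedPolynomials D B) : Q.natDegree ≤ D := by
  obtain ⟨v, -, rfl⟩ := mem_image.1 hQ
  exact natDegree_sum_le_of_forall_le _ _ fun i _ => (natDegree_monomial_le _).trans (by omega)

theorem card_filter_isRoot_eq_sum {α : Type*} (s : Finset α) (P : α → ℤ[X]) {n B : ℤ} {D : ℕ}
    (hn : 0 < n) (hB : 0 ≤ B) (hdeg : ∀ y ∈ s, (P y).natDegree ≤ D)
    (hcoeff : ∀ y ∈ s, ∀ i, |(P y).coeff i| ≤ B * (n - 1)) :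
    #{y ∈ s | (P y).IsRoot n} =
      ∑ Q ∈ boundedPolynomials D B, #{y ∈ s | P y = (X - C n) * Q} := by
  classical
  rw [card_eq_sum_card_fiberwise (f := fun y => P y /ₘ (X - C n)) (t := boundedPolynomials D B)]
  · refine sum_congr rfl fun Q _ => ?_
    rw [filter_filter]
    refine congrArg card (filter_congr fun y _ => ?_)
    constructor
    · rintro ⟨hroot, rfl⟩
      exact ((mul_divByMonic_eq_iff_isRoot).2 hroot).symm
    · intro hPQ
      have hdiv : P y /ₘ (X - C n) = Q := by
        rw [hPQ, mul_divByMonic_cancel_left _ (monic_X_sub_C n)]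
      exact ⟨mul_divByMonic_eq_iff_isRoot.1 (by rw [hdiv, hPQ]), hdiv⟩
  · intro y hy
    obtain ⟨hys, hroot⟩ := mem_filter.1 hy
    have hPQ := ((mul_divByMonic_eq_iff_isRoot).2 hroot).symm
    refine mem_boundedPolynomials ?_ (abs_coeff_le_of_eq_X_sub_C_mul hn hB hPQ (hcoeff y hys))
    rw [natDegree_divByMonic _ (monic_X_sub_C n)]
    exact (Nat.sub_le _ _).trans (hdeg y hys)

theorem bijOn_sum_mul_pow {n : ℤ} (hn : 0 < n) (L : ℕ) :
    Set.BijOn (fun y : Fin L → ℤ => ∑ j, y j * n ^ (j : ℕ))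
      {y | ∀ j, y j ∈ Set.Ico 0 n} (Set.Ico 0 (n ^ L)) := by
  induction L with
  | zero =>
    refine ⟨fun _ _ => by simp, fun y _ z _ _ => Subsingleton.elim y z, fun x hx => ?_⟩
    obtain rfl : x = 0 := by simp only [pow_zero, Set.mem_Ico] at hx; omega
    exact ⟨0, fun j => j.elim0, by simp⟩
  | succ L ih =>
    have hsum (y : Fin (L + 1) → ℤ) :
        ∑ j, y j * n ^ (j : ℕ) = y 0 + n * ∑ j : Fin L, y j.succ * n ^ (j : ℕ) := by
      rw [Fin.sum_univ_succ, mul_sum]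
      simp only [Fin.val_zero, pow_zero, mul_one, Fin.val_succ, pow_succ]
      congr 1; exact sum_congr rfl fun j _ => by ring
    refine ⟨fun y hy => ?_, fun y hy z hz hyz => ?_, fun x hx => ?_⟩
    · obtain ⟨h0, h1⟩ := ih.mapsTo (fun j => hy j.succ)
      obtain ⟨d0, d1⟩ := hy 0
      simp only [Set.mem_Ico, hsum, pow_succ'] at h0 h1 d0 d1 ⊢
      constructor <;> nlinarith
    · simp only [hsum] at hyz
      obtain ⟨hy0, hy1⟩ := hy 0
      obtain ⟨hz0, hz1⟩ := hz 0
      have h0 : y 0 = z 0 := by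
        have := congrArg (· % n) hyz
        simpa only [Int.add_mul_emod_self_left, Int.emod_eq_of_lt hy0 hy1,
          Int.emod_eq_of_lt hz0 hz1] using this
      rw [h0, add_right_inj, mul_right_inj' hn.ne'] at hyz
      have htail := ih.injOn (fun j => hy j.succ) (fun j => hz j.succ) hyz
      exact funext (Fin.cases h0 (congrFun htail))
    · obtain ⟨hx0, hx1⟩ := hx
      obtain ⟨y', hy', hy'x⟩ := ih.surjOn (a := x / n)
        ⟨Int.ediv_nonneg hx0 hn.le, Int.ediv_lt_of_lt_mul hn (by rwa [← pow_succ])⟩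
      have hd : x % n ∈ Set.Ico 0 n := ⟨Int.emod_nonneg _ hn.ne', Int.emod_lt_of_pos _ hn⟩
      refine ⟨Fin.cons (x % n) y', fun j => Fin.cases hd hy' j, ?_⟩
      simp only [hsum, Fin.cons_zero, Fin.cons_succ]
      rw [show ∑ j, y' j * n ^ (j : ℕ) = x / n from hy'x, Int.emod_add_mul_ediv]

section Digits

variable {k N : ℕ} (a : Fin k → ℤ[X]) (m : ℤ[X])

noncomputable def digitPoly (y : Fin k → Fin (N + 1) → ℤ) : ℤ[X] :=
  ∑ i, ∑ j : Fin (N + 1), C (y i j) * (a i * X ^ (j : ℕ)) - m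

noncomputable def digitBox (k N : ℕ) (n : ℤ) : Finset (Fin k → Fin (N + 1) → ℤ) :=
  Fintype.piFinset fun _ => Fintype.piFinset fun _ => Ico 0 n

theorem mem_digitBox {n : ℤ} {y : Fin k → Fin (N + 1) → ℤ} :
    y ∈ digitBox k N n ↔ ∀ i j, 0 ≤ y i j ∧ y i j < n := by
  simp only [digitBox, Fintype.mem_piFinset, mem_Ico]

theorem ncard_setOf_eq_card_filter_digitBox (n : ℤ) (p : (Fin k → Fin (N + 1) → ℤ) → Prop)
    [DecidablePred p] :
    {y | (∀ i j, 0 ≤ y i j ∧ y i j < n) ∧ p y}.ncard = #{y ∈ digitBox k N n | p y} := by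
  rw [← Set.ncard_coe_finset, coe_filter]
  simp only [mem_digitBox]

variable {a m}

theorem eval_digitPoly (y : Fin k → Fin (N + 1) → ℤ) (n : ℤ) :
    (digitPoly a m y).eval n = ∑ i, (a i).eval n * ∑ j, y i j * n ^ (j : ℕ) - m.eval n := by
  simp only [digitPoly, eval_sub, eval_finsetSum, eval_mul, eval_C, eval_pow, eval_X, mul_sum]
  congr 1
  exact sum_congr rfl fun i _ => sum_congr rfl fun j _ => by ring

theorem coeff_digitPoly (y : Fin k → Fin (N + 1) → ℤ) (e : ℕ) :
    (digitPoly a m y).coeff e = ∑ i, ∑ j, (a i * X ^ (j : ℕ)).coeff e * y i j - m.coeff e := by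
  simp only [digitPoly, coeff_sub, finsetSum_coeff, coeff_C_mul]
  congr 1
  exact sum_congr rfl fun i _ => sum_congr rfl fun j _ => mul_comm _ _

theorem natDegree_digitPoly_le (y : Fin k → Fin (N + 1) → ℤ) :
    (digitPoly a m y).natDegree ≤ N + m.natDegree + ∑ i, (a i).natDegree := by
  refine (natDegree_sub_le _ _).trans (max_le ?_ (by omega))
  refine natDegree_sum_le_of_forall_le _ _ fun i _ =>
    natDegree_sum_le_of_forall_le _ _ fun j _ => ?_
  have hai : (a i).natDegree ≤ ∑ i, (a i).natDegree :=
    single_le_sum (f := fun i => (a i).natDegree) (fun _ _ => Nat.zero_le _) (mem_univ i)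
  calc (C (y i j) * (a i * X ^ (j : ℕ))).natDegree ≤ (a i).natDegree + j :=
        natDegree_C_mul_le _ _ |>.trans <| natDegree_mul_le.trans <| by
          grw [natDegree_X_pow_le]
    _ ≤ _ := by omega

theorem abs_coeff_digitPoly_le {n : ℤ} (hn : 2 ≤ n) {y : Fin k → Fin (N + 1) → ℤ}
    (hy : y ∈ digitBox k N n) (e : ℕ) :
    |(digitPoly a m y).coeff e| ≤
      (∑ i, ∑ j : Fin (N + 1), absCoeffSum (a i * X ^ (j : ℕ)) + absCoeffSum m) * (n - 1) := by
  have hy' : ∀ i j, |y i j| ≤ n - 1 := fun i j => by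
    obtain ⟨h0, h1⟩ := mem_digitBox.1 hy i j
    rw [abs_of_nonneg h0]; omega
  have hm : |m.coeff e| ≤ absCoeffSum m * (n - 1) :=
    (abs_coeff_le_absCoeffSum m e).trans
      (le_mul_of_one_le_right (absCoeffSum_nonneg m) (by omega))
  rw [coeff_digitPoly]
  calc _ ≤ ∑ i, ∑ j, |(a i * X ^ (j : ℕ)).coeff e * y i j| + |m.coeff e| := by
        refine (abs_sub _ _).trans (add_le_add_left ?_ _)
        exact (abs_sum_le_sum_abs _ _).trans (sum_le_sum fun i _ => abs_sum_le_sum_abs _ _)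
    _ ≤ ∑ i, ∑ j : Fin (N + 1), absCoeffSum (a i * X ^ (j : ℕ)) * (n - 1) +
          absCoeffSum m * (n - 1) := by
      refine add_le_add (sum_le_sum fun i _ => sum_le_sum fun j _ => ?_) hm
      rw [abs_mul]
      exact mul_le_mul (abs_coeff_le_absCoeffSum _ e) (hy' i j) (abs_nonneg _)
        (absCoeffSum_nonneg _)
    _ = _ := by simp only [add_mul, sum_mul]

theorem digitPoly_eq_X_sub_C_mul_iff {D : ℕ} {y : Fin k → Fin (N + 1) → ℤ}
    (hy : (digitPoly a m y).natDegree ≤ D) {Q : ℤ[X]} (hQ : Q.natDegree ≤ D) (n : ℤ) :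
    digitPoly a m y = (X - C n) * Q ↔ ∀ e : Fin (D + 2),
      -Q.coeff e * n + ((X * Q).coeff e + m.coeff e) =
        ∑ i, ∑ j, (a i * X ^ (j : ℕ)).coeff e * y i j := by
  have hXQ : ((X - C n) * Q).natDegree ≤ D + 1 :=
    natDegree_mul_le.trans (by rw [natDegree_X_sub_C]; omega)
  rw [ext_iff_natDegree_le (hy.trans (Nat.le_succ D)) hXQ, Fin.forall_iff]
  refine forall_congr' fun e => ?_
  simp only [coeff_digitPoly, sub_mul, coeff_sub, coeff_C_mul]
  exact ⟨fun h he => by linarith [h (by omega)], fun h he => by linarith [h (by omega)]⟩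

theorem ncard_solutions_eq_card_filter_isRoot {n : ℤ} (hn : 0 < n) :
    {x : Fin k → ℤ | (∀ i, 0 ≤ x i ∧ x i < n ^ (N + 1)) ∧
        ∑ i, (a i).eval n * x i = m.eval n}.ncard =
      #{y ∈ digitBox k N n | (digitPoly a m y).IsRoot n} := by
  have hdigits := bijOn_sum_mul_pow hn (N + 1)
  set φ : (Fin k → Fin (N + 1) → ℤ) → Fin k → ℤ := fun y i => ∑ j, y i j * n ^ (j : ℕ)
  have hroot (y : Fin k → Fin (N + 1) → ℤ) :
      (digitPoly a m y).IsRoot n ↔ ∑ i, (a i).eval n * φ y i = m.eval n := by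
    rw [IsRoot.def, eval_digitPoly, sub_eq_zero]
  rw [← Set.ncard_coe_finset, coe_filter]
  have himage : {x : Fin k → ℤ | (∀ i, 0 ≤ x i ∧ x i < n ^ (N + 1)) ∧
        ∑ i, (a i).eval n * x i = m.eval n} =
      φ '' {y | y ∈ digitBox k N n ∧ (digitPoly a m y).IsRoot n} := by
    ext x
    constructor
    · rintro ⟨hx, hsum⟩
      choose y hy hyx using fun i => hdigits.surjOn (hx i)
      have hφ : φ y = x := funext hyx
      exact ⟨y, ⟨mem_digitBox.2 hy, (hroot y).2 (hφ ▸ hsum)⟩, hφ⟩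
    · rintro ⟨y, ⟨hy, hyroot⟩, rfl⟩
      exact ⟨fun i => hdigits.mapsTo (mem_digitBox.1 hy i), (hroot y).1 hyroot⟩
  rw [himage, Set.InjOn.ncard_image]
  rintro y ⟨hy, -⟩ z ⟨hz, -⟩ hyz
  exact funext fun i =>
    hdigits.injOn (mem_digitBox.1 hy i) (mem_digitBox.1 hz i) (congrFun hyz i)

end Digits

theorem stmt4_general (k N : ℕ) (a : Fin k → Polynomial ℤ) (m : Polynomial ℤ) :
    ∃ (T : ℕ) (E : Fin T → ℕ)
      (A B : (t : Fin T) → Fin (E t) → ℤ)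
      (coef : (t : Fin T) → Fin (E t) → Fin k → Fin (N + 1) → ℤ)
      (N₀ : ℤ),
      ∀ n : ℤ, N₀ ≤ n →
        {x : Fin k → ℤ | (∀ i, 0 ≤ x i ∧ x i < n ^ (N + 1)) ∧
            ∑ i, (a i).eval n * x i = m.eval n}.ncard =
        ∑ t : Fin T,
          {x : Fin k → Fin (N + 1) → ℤ | (∀ i j, 0 ≤ x i j ∧ x i j < n) ∧
            ∀ e : Fin (E t),
              A t e * n + B t e = ∑ i, ∑ j, coef t e i j * x i j}.ncard := by
  classical
  set D := N + m.natDegree + ∑ i, (a i).natDegree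
  set bound := ∑ i, ∑ j : Fin (N + 1), absCoeffSum (a i * X ^ (j : ℕ)) + absCoeffSum m
  set Qs := boundedPolynomials D bound
  set Q : Fin #Qs → ℤ[X] := fun t => Qs.equivFin.symm t
  refine ⟨#Qs, fun _ => D + 2, fun t e => -(Q t).coeff e,
    fun t e => (X * Q t).coeff e + m.coeff e, fun _ e i j => (a i * X ^ (j : ℕ)).coeff e, 2,
    fun n hn => ?_⟩
  have hbound : 0 ≤ bound := add_nonneg
    (sum_nonneg fun _ _ => sum_nonneg fun _ _ => absCoeffSum_nonneg _) (absCoeffSum_nonneg m)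
  rw [ncard_solutions_eq_card_filter_isRoot (by omega),
    card_filter_isRoot_eq_sum _ _ (by omega) hbound (fun y _ => natDegree_digitPoly_le y)
      (fun y hy => abs_coeff_digitPoly_le hn hy),
    ← sum_coe_sort Qs, ← Qs.equivFin.symm.sum_comp]
  refine sum_congr rfl fun t _ => ?_
  rw [ncard_setOf_eq_card_filter_digitBox]
  exact congrArg card (filter_congr fun y _ => digitPoly_eq_X_sub_C_mul_iff
    (natDegree_digitPoly_le y) (natDegree_le_of_mem_boundedPolynomials (Qs.equivFin.symm t).2) n)

/-- Lemma on rewriting solutions in base `n`: the solution count of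
`a₁(n)x₁ + ⋯ + a_k(n)x_k = m(n)` with `0 ≤ x_i < n^(N+1)` equals, for `n ≫ 0`, the sum
over finitely many systems of constraints of the form `An + B = f(x)` (with `A, B ∈ ℤ` and
`f` a linear form with constant integer coefficients in the variables `x_{ij}`) of the
number of integer solutions `(x_{ij})` with `0 ≤ x_{ij} < n`. -/
theorem stmt4 (k N : ℕ) (a : Fin k → Polynomial ℤ) (m : Polynomial ℤ)
    (hm : 0 < m.leadingCoeff) :
    ∃ (T : ℕ) (E : Fin T → ℕ)
      (A B : (t : Fin T) → Fin (E t) → ℤ)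
      (coef : (t : Fin T) → Fin (E t) → Fin k → Fin (N + 1) → ℤ)
      (N₀ : ℤ),
      ∀ n : ℤ, N₀ ≤ n →
        {x : Fin k → ℤ | (∀ i, 0 ≤ x i ∧ x i < n ^ (N + 1)) ∧
            ∑ i, (a i).eval n * x i = m.eval n}.ncard =
        ∑ t : Fin T,
          {x : Fin k → Fin (N + 1) → ℤ | (∀ i j, 0 ≤ x i j ∧ x i j < n) ∧
            ∀ e : Fin (E t),
              A t e * n + B t e = ∑ i, ∑ j, coef t e i j * x i j}.ncard :=
  stmt4_general k N a m
end

section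
/- Let f(x), g(x) ∈ ℤ[x] with g having positive leading coefficient (so g(n) > 0 for all sufficiently large n). Then both functions n ↦ ⌊f(n)/g(n)⌋ (the quotient) and n ↦ f(n) − g(n)·⌊f(n)/g(n)⌋ (the remainder, which satisfies 0 ≤ remainder < g(n)) are eventually quasi-polynomial, i.e. lie in QP_{≫0}. Equivalently, there exist a positive integer T and polynomials p_i(x), r_i(x) ∈ ℤ[x] for i = 0, …, T − 1 such that for all sufficiently large n, writing n = Tm + i with 0 ≤ i < T, one has ⌊f(n)/g(n)⌋ = p_i(m) and f(n) − g(n)⌊f(n)/g(n)⌋ = r_i(m). -/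
/-!
Over `ℚ` write `f = g * Q + R` with `deg R < deg g`, and pick `T > 0` with `T * Q ∈ ℤ[x]`.
Then `Q(T m + i) - Q(i)` is an integer polynomial `P_i(m)`, so on the class `n = T m + i`
`⌊f(n) / g(n)⌋ = P_i(m) + ⌊Q(i) + R(n) / g(n)⌋`. As `R(n) / g(n) → 0` and has eventually
constant sign, the last floor is eventually constant: `⌊Q(i)⌋` if the sign is `≥ 0`, and
`⌈Q(i)⌉ - 1` otherwise.
-/

/-- A function `f : ℤ → ℤ` is *eventually quasi-polynomial* if there exist a positive
integer `s`, polynomials `c 0, …, c (s-1) ∈ ℚ[x]`, and an integer `N` such that for all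
`n ≥ N`, `f n = (c i).eval n` where `i` is the residue of `n` modulo `s`. -/
def IsEQP (f : ℤ → ℤ) : Prop :=
  ∃ s : ℕ, 0 < s ∧ ∃ (c : ℕ → Polynomial ℚ) (N : ℤ),
    ∀ n : ℤ, N ≤ n → (f n : ℚ) = (c (n % (s : ℤ)).toNat).eval (n : ℚ)

open Filter Topology

namespace Polynomial

section OrderedField

variable {𝕜 : Type*} [NormedField 𝕜] [LinearOrder 𝕜] [IsStrictOrderedRing 𝕜] [OrderTopology 𝕜]

theorem eventually_atTop_eval_pos {P : 𝕜[X]} (hP : 0 < P.leadingCoeff) :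
    ∀ᶠ x in atTop, 0 < P.eval x :=
  P.isEquivalent_atTop_lead.eventually_pos <|
    (eventually_gt_atTop 0).mono fun x hx => by positivity

theorem eventually_atTop_eval_nonneg_or_neg (P : 𝕜[X]) :
    (∀ᶠ x in atTop, 0 ≤ P.eval x) ∨ ∀ᶠ x in atTop, P.eval x < 0 := by
  rcases le_or_gt 0 P.leadingCoeff with h | h
  · exact .inl <| P.isEquivalent_atTop_lead.eventually_nonneg <|
      (eventually_ge_atTop 0).mono fun x hx => by positivity
  · exact .inr <| P.isEquivalent_atTop_lead.eventually_neg <|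
      (eventually_gt_atTop 0).mono fun x hx => mul_neg_of_neg_of_pos h (pow_pos hx _)

theorem exists_eventually_floor_add_div_eq [FloorRing 𝕜] (c : 𝕜) {R G : 𝕜[X]}
    (hdeg : R.degree < G.degree) (hG : 0 < G.leadingCoeff) :
    ∃ k : ℤ, ∀ᶠ x in atTop, ⌊c + R.eval x / G.eval x⌋ = k := by
  have hlim : Tendsto (fun x => c + R.eval x / G.eval x) atTop (𝓝 c) := by
    simpa using tendsto_const_nhds.add (R.div_tendsto_atTop_zero_of_degree_lt G hdeg)
  rcases R.eventually_atTop_eval_nonneg_or_neg with hR | hR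
  · refine ⟨⌊c⌋, tendsto_pure.1 <| (tendsto_floor_right_pure_floor c).comp <|
      tendsto_nhdsWithin_iff.2 ⟨hlim, ?_⟩⟩
    filter_upwards [hR, eventually_atTop_eval_pos hG] with x hRx hGx
    simpa using div_nonneg hRx hGx.le
  · refine ⟨⌈c⌉ - 1, tendsto_pure.1 <| (tendsto_floor_left_pure_ceil_sub_one c).comp <|
      tendsto_nhdsWithin_iff.2 ⟨hlim, ?_⟩⟩
    filter_upwards [hR, eventually_atTop_eval_pos hG] with x hRx hGx
    simpa using div_neg_of_neg_of_pos hRx hGx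

end OrderedField

theorem eventually_atTop_eval_pos_int {g : ℤ[X]} (hg : 0 < g.leadingCoeff) :
    ∀ᶠ n : ℤ in atTop, 0 < g.eval n := by
  have hgQ : 0 < (g.map (Int.castRingHom ℚ)).leadingCoeff := by
    rw [leadingCoeff_map_of_injective (RingHom.injective_int _), eq_intCast]
    exact_mod_cast hg
  filter_upwards [tendsto_intCast_atTop_atTop.eventually (eventually_atTop_eval_pos hgQ)]
    with n hn
  rwa [eval_intCast_map, eq_intCast, Int.cast_pos] at hn

theorem C_dvd_comp_C_mul_X_add_C_sub {R : Type*} [CommRing R] (p : R[X]) (d a : R) :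
    C d ∣ p.comp (C d * X + C a) - C (p.eval a) := by
  obtain ⟨q, hq⟩ : X - C a ∣ p - C (p.eval a) := X_sub_C_dvd_sub_C_eval
  refine ⟨X * q.comp (C d * X + C a), ?_⟩
  have h := congrArg (·.comp (C d * X + C a)) hq
  simp only [sub_comp, mul_comp, X_comp, C_comp] at h
  rw [h]
  ring

theorem exists_pos_C_mul_mem_lifts_int (Q : ℚ[X]) :
    ∃ T : ℕ, 0 < T ∧ C (T : ℚ) * Q ∈ lifts (Int.castRingHom ℚ) := by
  obtain ⟨b, hb0, hb⟩ := IsLocalization.integerNormalization_spec (nonZeroDivisors ℤ) Q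
  refine ⟨b.natAbs, Int.natAbs_pos.2 (nonZeroDivisors.ne_zero hb0), (mem_lifts _).2
    ⟨C b.sign * IsLocalization.integerNormalization (nonZeroDivisors ℤ) Q, ?_⟩⟩
  rw [Polynomial.map_mul, map_C, show Int.castRingHom ℚ = algebraMap ℤ ℚ from rfl, hb,
    zsmul_eq_mul, ← C_eq_intCast, ← mul_assoc, ← C_mul, eq_intCast]
  congr 2
  rw [← Int.cast_natCast, ← Int.sign_mul_self_eq_natAbs, Int.cast_mul]

theorem exists_eval_mul_add_eq_eval_add {Q : ℚ[X]} {T : ℕ} (hT : 0 < T)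
    (hQ : C (T : ℚ) * Q ∈ lifts (Int.castRingHom ℚ)) (a : ℤ) :
    ∃ P : ℤ[X], ∀ m : ℤ, Q.eval ((T * m + a : ℤ) : ℚ) = P.eval m + Q.eval (a : ℚ) := by
  obtain ⟨Q', hQ'⟩ := (mem_lifts _).1 hQ
  obtain ⟨P, hP⟩ := C_dvd_comp_C_mul_X_add_C_sub Q' T a
  have hQ'eval (x : ℤ) : ((Q'.eval x : ℤ) : ℚ) = T * Q.eval (x : ℚ) := by
    simpa [hQ'] using (eval_intCast_map (Int.castRingHom ℚ) Q' x).symm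
  refine ⟨P, fun m => ?_⟩
  have hm := congrArg (fun p => ((p.eval m : ℤ) : ℚ)) hP
  simp only [eval_sub, eval_comp, eval_add, eval_mul, eval_C, eval_X] at hm
  rw [Int.cast_sub, Int.cast_mul, hQ'eval, hQ'eval] at hm
  apply mul_left_cancel₀ (show (T : ℚ) ≠ 0 by positivity)
  linear_combination hm

theorem exists_floor_div_eq_eval (f g : ℤ[X]) (hg : 0 < g.leadingCoeff) :
    ∃ T : ℕ, 0 < T ∧ ∃ p : Fin T → ℤ[X], ∀ᶠ n : ℤ in atTop, ∀ (m : ℤ) (i : Fin T),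
      n = T * m + i → ⌊((f.eval n : ℤ) : ℚ) / ((g.eval n : ℤ) : ℚ)⌋ = (p i).eval m := by
  set fQ := f.map (Int.castRingHom ℚ)
  set gQ := g.map (Int.castRingHom ℚ)
  have hgQ : 0 < gQ.leadingCoeff := by
    rw [leadingCoeff_map_of_injective (RingHom.injective_int _), eq_intCast]
    exact_mod_cast hg
  have hdiv (x : ℚ) : fQ.eval x = gQ.eval x * (fQ / gQ).eval x + (fQ % gQ).eval x := by
    rw [← eval_mul, ← eval_add, EuclideanDomain.div_add_mod]
  obtain ⟨T, hT, hTQ⟩ := exists_pos_C_mul_mem_lifts_int (fQ / gQ)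
  choose P hP using exists_eval_mul_add_eq_eval_add hT hTQ
  choose k hk using fun i : Fin T =>
    exists_eventually_floor_add_div_eq ((fQ / gQ).eval ((i : ℤ) : ℚ))
      (degree_mod_lt fQ (leadingCoeff_ne_zero.1 hgQ.ne')) hgQ
  refine ⟨T, hT, fun i => P i + C (k i), ?_⟩
  filter_upwards [tendsto_intCast_atTop_atTop.eventually
    ((eventually_all.2 hk).and (eventually_atTop_eval_pos hgQ))] with n ⟨hkn, hgn⟩ m i hn
  have hfg : ((f.eval n : ℤ) : ℚ) / ((g.eval n : ℤ) : ℚ) = ((P i).eval m : ℤ) +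
      ((fQ / gQ).eval ((i : ℤ) : ℚ) + (fQ % gQ).eval (n : ℚ) / gQ.eval (n : ℚ)) := by
    rw [show ((f.eval n : ℤ) : ℚ) = fQ.eval (n : ℚ) by simp [fQ, eval_intCast_map],
      show ((g.eval n : ℤ) : ℚ) = gQ.eval (n : ℚ) by simp [gQ, eval_intCast_map], hdiv]
    field_simp
    rw [hn, hP]
    ring
  rw [hfg, Int.floor_intCast_add, hkn i, eval_add, eval_C]

theorem exists_floor_div_and_sub_mul_floor_div_eq_eval (f g : ℤ[X]) (hg : 0 < g.leadingCoeff) :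
    ∃ T : ℕ, 0 < T ∧ ∃ (p r : Fin T → ℤ[X]) (N : ℤ),
      ∀ n : ℤ, N ≤ n → ∀ (m : ℤ) (i : Fin T), n = (T : ℤ) * m + (i : ℤ) →
        ⌊((f.eval n : ℤ) : ℚ) / ((g.eval n : ℤ) : ℚ)⌋ = (p i).eval m ∧
        f.eval n - g.eval n * ⌊((f.eval n : ℤ) : ℚ) / ((g.eval n : ℤ) : ℚ)⌋ =
          (r i).eval m := by
  obtain ⟨T, hT, p, hp⟩ := exists_floor_div_eq_eval f g hg
  obtain ⟨N, hN⟩ := eventually_atTop.1 hp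
  refine ⟨T, hT, p, fun i => f.comp (C (T : ℤ) * X + C (i : ℤ)) -
    g.comp (C (T : ℤ) * X + C (i : ℤ)) * p i, N, fun n hn m i hnmi => ⟨hN n hn m i hnmi, ?_⟩⟩
  rw [hN n hn m i hnmi, hnmi]
  simp

end Polynomial

theorem Int.sub_mul_floor_div_mem_Ico {a b : ℤ} (hb : 0 < b) :
    a - b * ⌊(a : ℚ) / (b : ℚ)⌋ ∈ Set.Ico 0 b := by
  lift b to ℕ using hb.le
  rw [Int.cast_natCast, ← Int.mod_nat_eq_sub_mul_floor_rat_div]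
  exact ⟨Int.emod_nonneg a hb.ne', Int.emod_lt_of_pos a hb⟩

open Polynomial in
theorem IsEQP.of_eq_eval_on_residueClasses {F : ℤ → ℤ} {T : ℕ} (hT : 0 < T) (p : Fin T → ℤ[X])
    (N : ℤ) (h : ∀ n : ℤ, N ≤ n → ∀ (m : ℤ) (i : Fin T), n = T * m + i → F n = (p i).eval m) :
    IsEQP F := by
  refine ⟨T, hT, fun j => if hj : j < T then ((p ⟨j, hj⟩).map (Int.castRingHom ℚ)).comp
    (C (T : ℚ)⁻¹ * (X - C (j : ℚ))) else 0, N, fun n hn => ?_⟩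
  have hTz : (0 : ℤ) < T := by exact_mod_cast hT
  have hj : ((n % T).toNat : ℤ) = n % T := Int.toNat_of_nonneg (Int.emod_nonneg n hTz.ne')
  have hjT : (n % T).toNat < T := by have := Int.emod_lt_of_pos n hTz; omega
  have hnm : n = T * (n / T) + (((⟨(n % T).toNat, hjT⟩ : Fin T) : ℕ) : ℤ) := by
    rw [Fin.val_mk, hj, Int.mul_ediv_add_emod]
  simp only [h n hn _ _ hnm, dif_pos hjT, eval_comp, eval_mul, eval_C, eval_sub, eval_X]
  have hm : (T : ℚ)⁻¹ * ((n : ℚ) - ((n % T).toNat : ℕ)) = ((n / T : ℤ) : ℚ) := by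
    rw [inv_mul_eq_iff_eq_mul₀ (by positivity), sub_eq_iff_eq_add]
    exact_mod_cast hnm
  rw [hm, eval_intCast_map, eq_intCast, Int.cast_id]

/-- Generalized division for `ℤ[x]`: the quotient `⌊f(n)/g(n)⌋` and the remainder
`f(n) - g(n)⌊f(n)/g(n)⌋` are eventually quasi-polynomial; equivalently they are given on
each residue class `n = Tm + i` modulo a suitable `T` by integer polynomials in `m`. -/
theorem stmt7 (f g : Polynomial ℤ) (hg : 0 < g.leadingCoeff) :
    IsEQP (fun n => ⌊((f.eval n : ℤ) : ℚ) / ((g.eval n : ℤ) : ℚ)⌋) ∧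
    IsEQP (fun n => f.eval n - g.eval n * ⌊((f.eval n : ℤ) : ℚ) / ((g.eval n : ℤ) : ℚ)⌋) ∧
    (∃ N₁ : ℤ, ∀ n : ℤ, N₁ ≤ n →
      0 ≤ f.eval n - g.eval n * ⌊((f.eval n : ℤ) : ℚ) / ((g.eval n : ℤ) : ℚ)⌋ ∧
      f.eval n - g.eval n * ⌊((f.eval n : ℤ) : ℚ) / ((g.eval n : ℤ) : ℚ)⌋ < g.eval n) ∧
    ∃ T : ℕ, 0 < T ∧ ∃ (p r : Fin T → Polynomial ℤ) (N : ℤ),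
      ∀ n : ℤ, N ≤ n → ∀ (m : ℤ) (i : Fin T), n = (T : ℤ) * m + (i : ℤ) →
        ⌊((f.eval n : ℤ) : ℚ) / ((g.eval n : ℤ) : ℚ)⌋ = (p i).eval m ∧
        f.eval n - g.eval n * ⌊((f.eval n : ℤ) : ℚ) / ((g.eval n : ℤ) : ℚ)⌋ =
          (r i).eval m := by
  obtain ⟨T, hT, p, r, N, h⟩ := Polynomial.exists_floor_div_and_sub_mul_floor_div_eq_eval f g hg
  obtain ⟨N₁, hN₁⟩ := eventually_atTop.1 (Polynomial.eventually_atTop_eval_pos_int hg)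
  exact ⟨.of_eq_eval_on_residueClasses hT p N fun n hn m i hnmi => (h n hn m i hnmi).1,
    .of_eq_eval_on_residueClasses hT r N fun n hn m i hnmi => (h n hn m i hnmi).2,
    ⟨N₁, fun n hn => Int.sub_mul_floor_div_mem_Ico (hN₁ n hn)⟩, T, hT, p, r, N, h⟩
end

section
/- Let f, g ∈ QP_{≫0} and define d(n) = gcd(f(n), g(n)) (the greatest common divisor of the two integer values, taken nonnegative). Then d ∈ QP_{≫0}. In particular this holds when f and g are integer-coefficient polynomials or numerical polynomials. -/
/-!
Inside one residue class the two functions are values of polynomials `F, G ∈ ℚ[X]`. Write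
`F = H F₁`, `G = H G₁` with `F₁, G₁` coprime and clear a common denominator: `d F₁ = P`,
`d G₁ = Q` with `P, Q ∈ ℤ[X]`, and a Bézout identity `A P + B Q = c` holds with `A, B ∈ ℤ[X]`
and `c` a nonzero integer. Then `gcd (F n) (G n) = |H n / d| * gcd (P n) (Q n)`; the second factor
divides `c`, hence is `c`-periodic in `n`, and the first is eventually a polynomial because `H n`
has eventually constant sign. Gluing the finitely many residue classes gives the theorem.
-/

open Polynomial Filter Function

theorem Function.Periodic.apply_emod {α : Type*} {c : ℤ → α} {s : ℤ} (hc : Periodic c s)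
    (n : ℤ) : c (n % s) = c n := by
  rw [Int.emod_def, mul_comm]
  exact hc.sub_int_mul_eq _

theorem Int.emod_mem_Ico (n : ℤ) {s : ℕ} (hs : 0 < s) : n % s ∈ Finset.Ico (0 : ℤ) s :=
  Finset.mem_Ico.2 ⟨Int.emod_nonneg _ (by omega), Int.emod_lt_of_pos _ (by omega)⟩

theorem Function.Periodic.exists_pos_period_comp {α β : Type*} {c : ℤ → β} {s : ℕ}
    (hc : Periodic c s) (hs : 0 < s) {p : β → ℤ → α}
    (hp : ∀ b, ∃ T : ℕ, 0 < T ∧ Periodic (p b) T) :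
    ∃ S : ℕ, 0 < S ∧ Periodic (fun n => p (c n) n) S := by
  choose T hT hpT using hp
  set S := (∏ r ∈ Finset.Ico (0 : ℤ) s, T (c r)) * s
  refine ⟨S, Nat.mul_pos (Finset.prod_pos fun r _ => hT _) hs, fun n => ?_⟩
  obtain ⟨k, hk⟩ := Finset.dvd_prod_of_mem (fun r => T (c r)) (n.emod_mem_Ico hs)
  rw [hc.apply_emod] at hk
  have hS : (S : ℤ) = (k * s : ℕ) * T (c n) := by
    simp only [S, hk]; push_cast; ring
  have hcS : c (n + S) = c n := by
    simp only [S, Nat.cast_mul]; exact hc.nat_mul _ n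
  dsimp only
  rw [hcS, hS]
  exact (hpT _).nat_mul _ n

theorem Function.Periodic.eventually_comp {β : Type*} {c : ℤ → β} {s : ℕ}
    (hc : Periodic c s) (hs : 0 < s) {P : β → ℤ → Prop} (h : ∀ b, ∀ᶠ n in atTop, P b n) :
    ∀ᶠ n in atTop, P (c n) n := by
  filter_upwards [(eventually_all_finset (Finset.Ico (0 : ℤ) s)).2 fun r _ => h (c r)]
    with n hn
  rw [← hc.apply_emod n]
  exact hn _ (n.emod_mem_Ico hs)

theorem isEQP_iff_periodic (f : ℤ → ℤ) : IsEQP f ↔ ∃ s : ℕ, 0 < s ∧ ∃ c : ℤ → ℚ[X],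
    Periodic c s ∧ ∀ᶠ n in atTop, (f n : ℚ) = (c n).eval (n : ℚ) := by
  constructor
  · rintro ⟨s, hs, c, N, h⟩
    exact ⟨s, hs, fun n => c (n % s).toNat, fun n => by simp, eventually_atTop.2 ⟨N, h⟩⟩
  · rintro ⟨s, hs, c, hc, h⟩
    obtain ⟨N, hN⟩ := eventually_atTop.1 h
    refine ⟨s, hs, fun k => c k, N, fun n hn => ?_⟩
    dsimp only
    rw [Int.toNat_of_nonneg (Int.emod_nonneg _ (by omega)), hc.apply_emod]
    exact hN n hn

theorem Polynomial.exists_eventually_abs_eval_eq {𝕜 : Type*} [NormedField 𝕜] [LinearOrder 𝕜]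
    [IsStrictOrderedRing 𝕜] [OrderTopology 𝕜] (p : 𝕜[X]) :
    ∃ q : 𝕜[X], ∀ᶠ x in atTop, |p.eval x| = q.eval x := by
  rcases le_or_gt p.degree 0 with hdeg | hdeg
  · exact ⟨C |p.coeff 0|, .of_forall fun x => by rw [eq_C_of_degree_le_zero hdeg]; simp⟩
  rcases le_total 0 p.leadingCoeff with hlc | hlc
  · exact ⟨p, ((p.tendsto_atTop_of_leadingCoeff_nonneg hdeg hlc).eventually_ge_atTop 0).mono
      fun x hx => abs_of_nonneg hx⟩
  · exact ⟨-p, ((p.tendsto_atBot_of_leadingCoeff_nonpos hdeg hlc).eventually_le_atBot 0).mono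
      fun x hx => by rw [abs_of_nonpos hx, eval_neg]⟩

theorem Polynomial.exists_map_eq_C_mul (p : ℚ[X]) :
    ∃ d : ℤ, d ≠ 0 ∧ ∃ P : ℤ[X], P.map (Int.castRingHom ℚ) = C (d : ℚ) * p := by
  obtain ⟨d, hd, h⟩ := IsLocalization.integerNormalization_spec (nonZeroDivisors ℤ) p
  refine ⟨d, nonZeroDivisors.ne_zero hd,
    IsLocalization.integerNormalization (nonZeroDivisors ℤ) p, ?_⟩
  rw [← algebraMap_int_eq, h, zsmul_eq_mul, ← C_eq_intCast]

theorem Polynomial.exists_map_eq_C_mul₂ (p q : ℚ[X]) : ∃ d : ℤ, d ≠ 0 ∧ ∃ P Q : ℤ[X],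
    P.map (Int.castRingHom ℚ) = C (d : ℚ) * p ∧ Q.map (Int.castRingHom ℚ) = C (d : ℚ) * q := by
  obtain ⟨d₁, hd₁, P, hP⟩ := p.exists_map_eq_C_mul
  obtain ⟨d₂, hd₂, Q, hQ⟩ := q.exists_map_eq_C_mul
  refine ⟨d₁ * d₂, mul_ne_zero hd₁ hd₂, C d₂ * P, C d₁ * Q, ?_, ?_⟩
  · rw [Polynomial.map_mul, hP, map_C]; simp only [eq_intCast, Int.cast_mul, C_mul]; ring
  · rw [Polynomial.map_mul, hQ, map_C]; simp only [eq_intCast, Int.cast_mul, C_mul]; ring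

theorem Polynomial.exists_gcd_eval_dvd_of_isCoprime_map {P Q : ℤ[X]}
    (h : IsCoprime (P.map (Int.castRingHom ℚ)) (Q.map (Int.castRingHom ℚ))) :
    ∃ c : ℕ, 0 < c ∧ ∀ n, (Int.gcd (P.eval n) (Q.eval n) : ℤ) ∣ c := by
  obtain ⟨A, B, hAB⟩ := h
  obtain ⟨d, hd, A', B', hA, hB⟩ := exists_map_eq_C_mul₂ A B
  have hint : A' * P + B' * Q = C d := by
    apply map_injective (Int.castRingHom ℚ) Int.cast_injective
    rw [Polynomial.map_add, Polynomial.map_mul, Polynomial.map_mul, hA, hB, map_C,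
      eq_intCast, mul_assoc, mul_assoc, ← mul_add, hAB, mul_one]
  refine ⟨d.natAbs, Int.natAbs_pos.2 hd, fun n => ?_⟩
  rw [Int.natCast_natAbs, dvd_abs, ← eval_C (a := d) (x := n), ← hint, eval_add, eval_mul,
    eval_mul]
  exact dvd_add (dvd_mul_of_dvd_right (Int.gcd_dvd_left _ _) _)
    (dvd_mul_of_dvd_right (Int.gcd_dvd_right _ _) _)

theorem Polynomial.gcd_eval_dvd_gcd_eval_of_dvd_sub {P Q : ℤ[X]} {m n : ℤ}
    (h : (Int.gcd (P.eval m) (Q.eval m) : ℤ) ∣ m - n) :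
    Int.gcd (P.eval m) (Q.eval m) ∣ Int.gcd (P.eval n) (Q.eval n) := by
  have hP := dvd_sub (Int.gcd_dvd_left _ _) (h.trans (sub_dvd_eval_sub m n P))
  have hQ := dvd_sub (Int.gcd_dvd_right _ _) (h.trans (sub_dvd_eval_sub m n Q))
  rw [sub_sub_cancel] at hP hQ
  exact Int.natCast_dvd_natCast.1 (Int.dvd_coe_gcd hP hQ)

theorem Polynomial.periodic_gcd_eval_of_dvd {P Q : ℤ[X]} {c : ℤ}
    (h : ∀ n, (Int.gcd (P.eval n) (Q.eval n) : ℤ) ∣ c) :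
    Periodic (fun n => Int.gcd (P.eval n) (Q.eval n)) c := fun n =>
  Nat.dvd_antisymm (gcd_eval_dvd_gcd_eval_of_dvd_sub (by simpa using h (n + c)))
    (gcd_eval_dvd_gcd_eval_of_dvd_sub (by simpa using (h n).neg_right))

theorem Int.gcd_eq_abs_mul_gcd_of_eq_mul {a b p q : ℤ} {h : ℚ} (ha : (a : ℚ) = h * p)
    (hb : (b : ℚ) = h * q) : (Int.gcd a b : ℚ) = |h| * Int.gcd p q := by
  have hden : (0 : ℚ) < h.den := by positivity
  have key : Int.gcd (h.den * a) (h.den * b) = Int.gcd (h.num * p) (h.num * q) := by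
    congr 1 <;> (qify; rw [← Rat.mul_den_eq_num]) <;> [rw [ha]; rw [hb]] <;> ring
  rw [Int.gcd_mul_left, Int.gcd_mul_left, Int.natAbs_natCast] at key
  have habs : |h| * h.den = |(h.num : ℚ)| := by
    rw [← Rat.mul_den_eq_num, abs_mul, abs_of_pos hden]
  rw [← mul_left_inj' hden.ne', mul_right_comm, habs, mul_comm, ← Int.cast_abs,
    Int.abs_eq_natAbs]
  exact_mod_cast key

theorem Polynomial.exists_periodic_gcd_eval (F G : ℚ[X]) :
    ∃ T : ℕ, 0 < T ∧ ∃ p : ℤ → ℚ[X], Periodic p T ∧ ∀ᶠ n : ℤ in atTop, ∀ a b : ℤ,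
      (a : ℚ) = F.eval (n : ℚ) → (b : ℚ) = G.eval (n : ℚ) →
        (Int.gcd a b : ℚ) = (p n).eval (n : ℚ) := by
  obtain ⟨F₁, G₁, hF, hG, hcop⟩ := extract_gcd F G
  set H := gcd F G
  obtain ⟨d, hd, P, Q, hP, hQ⟩ := exists_map_eq_C_mul₂ F₁ G₁
  have hPQ : IsCoprime (P.map (Int.castRingHom ℚ)) (Q.map (Int.castRingHom ℚ)) := by
    rw [hP, hQ, isCoprime_mul_unit_left (isUnit_C.2 (by simpa using hd))]
    exact (gcd_isUnit_iff _ _).1 hcop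
  obtain ⟨T, hT, hdvd⟩ := exists_gcd_eval_dvd_of_isCoprime_map hPQ
  obtain ⟨q, hq⟩ := (C (d : ℚ)⁻¹ * H).exists_eventually_abs_eval_eq
  have hPn (n : ℤ) : ((P.eval n : ℤ) : ℚ) = d * F₁.eval (n : ℚ) := by
    simpa using congrArg (eval (n : ℚ)) hP
  have hQn (n : ℤ) : ((Q.eval n : ℤ) : ℚ) = d * G₁.eval (n : ℚ) := by
    simpa using congrArg (eval (n : ℚ)) hQ
  refine ⟨T, hT, fun n => C (Int.gcd (P.eval n) (Q.eval n) : ℚ) * q,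
    fun n => by simp only [periodic_gcd_eval_of_dvd hdvd n], ?_⟩
  filter_upwards [tendsto_intCast_atTop_atTop.eventually hq] with n hn a b ha hb
  rw [eval_mul, eval_C, ← hn, mul_comm]
  apply Int.gcd_eq_abs_mul_gcd_of_eq_mul
  · rw [ha, hPn, hF, eval_mul, eval_mul, eval_C]; field_simp
  · rw [hb, hQn, hG, eval_mul, eval_mul, eval_C]; field_simp

/-- Generalized GCD: if `f, g ∈ QP_{≫0}` then `n ↦ gcd(f(n), g(n))` lies in `QP_{≫0}`. -/
theorem stmt9 (f g : ℤ → ℤ) (hf : IsEQP f) (hg : IsEQP g) :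
    IsEQP (fun n => (Int.gcd (f n) (g n) : ℤ)) := by
  obtain ⟨s₁, hs₁, c₁, hc₁, hf⟩ := (isEQP_iff_periodic f).1 hf
  obtain ⟨s₂, hs₂, c₂, hc₂, hg⟩ := (isEQP_iff_periodic g).1 hg
  have hc : Periodic (fun n => (c₁ n, c₂ n)) ((s₁ * s₂ : ℕ) : ℤ) := fun n =>
    Prod.ext (by simpa [mul_comm] using hc₁.nat_mul s₂ n) (by simpa using hc₂.nat_mul s₁ n)
  choose T hT p hp hgcd using exists_periodic_gcd_eval
  obtain ⟨S, hS, hpS⟩ := hc.exists_pos_period_comp (Nat.mul_pos hs₁ hs₂)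
    fun b => ⟨T b.1 b.2, hT _ _, hp _ _⟩
  refine (isEQP_iff_periodic _).2 ⟨S, hS, fun n => p (c₁ n) (c₂ n) n, hpS, ?_⟩
  filter_upwards [hf, hg, hc.eventually_comp (Nat.mul_pos hs₁ hs₂) fun b => hgcd b.1 b.2]
    with n hfn hgn hn
  exact_mod_cast hn (f n) (g n) hfn hgn
end

section
/- Let a and b be relatively prime positive integers. Then for every positive integer n, the number of pairs (x, y) ∈ ℤ_{≥0}² with ax + by = n equals n/(ab) − {na^{−1}/b} − {nb^{−1}/a} + 1, where a^{−1} and b^{−1} are integers satisfying aa^{−1} ≡ 1 (mod b) and bb^{−1} ≡ 1 (mod a). -/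
/-!
Since `a` and `b` are coprime, the solutions of `a x + b y = n` are `(x₀ + b k, y₀ - a k)`,
`k ∈ ℤ`, for the one with `0 ≤ x₀ < b`; the nonnegative ones are those with
`0 ≤ k ≤ ⌊y₀ / a⌋`, and `n > 0` forces `y₀ > -a`, so there are `⌊y₀ / a⌋ + 1` of them.
Reducing `a x₀ + b y₀ = n` modulo `b` and `a` gives `x₀ ≡ n a⁻¹ (mod b)` and
`y₀ ≡ n b⁻¹ (mod a)`, so `{n a⁻¹ / b} = x₀ / b` and `{n b⁻¹ / a} = {y₀ / a}`, and the formula is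
`n / (ab) = x₀ / b + y₀ / a` with `y₀ / a = ⌊y₀ / a⌋ + {y₀ / a}`.
-/

theorem Int.fract_intCast_div_eq_of_modEq {K : Type*} [Field K] [LinearOrder K]
    [IsStrictOrderedRing K] [FloorRing K] {m m' b : ℤ} (h : m ≡ m' [ZMOD b]) :
    Int.fract ((m : K) / b) = Int.fract ((m' : K) / b) := by
  rcases eq_or_ne b 0 with rfl | hb
  · simp
  obtain ⟨k, hk⟩ := h.dvd
  have hm' : (m' : K) / b = m / b + k := by
    rw [show m' = m + b * k by linarith]
    push_cast
    field_simp
  rw [hm', Int.fract_add_intCast]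

theorem modEq_mul_inv_of_add_mul_eq {a b ainv x y n : ℤ} (hinv : a * ainv ≡ 1 [ZMOD b])
    (h : a * x + b * y = n) : x ≡ n * ainv [ZMOD b] := by
  refine Int.modEq_iff_dvd.mpr ?_
  have hsplit : n * ainv - x = b * (y * ainv) + x * (a * ainv - 1) := by
    rw [← h]; ring
  rw [hsplit]
  exact dvd_add (dvd_mul_right b _) (dvd_mul_of_dvd_right (Int.ModEq.dvd hinv.symm) x)

theorem IsCoprime.exists_mem_Ico_add_mul_eq {a b : ℤ} (hb : 0 < b) (hcop : IsCoprime a b)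
    (n : ℤ) : ∃ x₀ ∈ Set.Ico 0 b, ∃ y₀, a * x₀ + b * y₀ = n := by
  obtain ⟨u, v, huv⟩ := hcop
  refine ⟨n * u % b, ⟨Int.emod_nonneg _ hb.ne', Int.emod_lt_of_pos _ hb⟩,
    n * v + a * (n * u / b), ?_⟩
  linear_combination n * huv + a * Int.emod_add_mul_ediv (n * u) b

theorem setOf_add_mul_eq {a b x₀ y₀ n : ℤ} (hb : b ≠ 0) (hcop : IsCoprime a b)
    (h₀ : a * x₀ + b * y₀ = n) :
    {xy : ℤ × ℤ | a * xy.1 + b * xy.2 = n} = Set.range fun k : ℤ ↦ (x₀ + b * k, y₀ - a * k) := by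
  ext ⟨x, y⟩
  simp only [Set.mem_ofPred_eq, Set.mem_range, Prod.mk.injEq]
  constructor
  · intro h
    obtain ⟨k, hk⟩ : b ∣ x - x₀ :=
      hcop.symm.dvd_of_dvd_mul_left ⟨y₀ - y, by linear_combination h - h₀⟩
    refine ⟨k, by linarith, ?_⟩
    refine mul_left_cancel₀ hb ?_
    linear_combination h₀ - h + a * hk
  · rintro ⟨k, rfl, rfl⟩
    linear_combination h₀

theorem setOf_nonneg_add_mul_eq {a b x₀ y₀ n : ℤ} (ha : 0 < a) (hb : 0 < b)
    (hcop : IsCoprime a b) (hx₀ : 0 ≤ x₀) (hx₀b : x₀ < b) (h₀ : a * x₀ + b * y₀ = n) :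
    {xy : ℤ × ℤ | 0 ≤ xy.1 ∧ 0 ≤ xy.2 ∧ a * xy.1 + b * xy.2 = n} =
      (fun k : ℤ ↦ (x₀ + b * k, y₀ - a * k)) '' Set.Icc 0 ⌊(y₀ : ℚ) / a⌋ := by
  have hsol := setOf_add_mul_eq hb.ne' hcop h₀
  have hle_floor (k : ℤ) : k ≤ ⌊(y₀ : ℚ) / a⌋ ↔ a * k ≤ y₀ := by
    rw [Int.le_floor, le_div_iff₀ (by exact_mod_cast ha), mul_comm]
    exact_mod_cast Iff.rfl
  ext xy
  constructor
  · rintro ⟨hx, hy, h⟩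
    obtain ⟨k, rfl⟩ := hsol.subset h
    refine ⟨k, ⟨?_, (hle_floor k).2 (by linarith [hy])⟩, rfl⟩
    have : b * (-1) < b * k := by linarith [hx]
    linarith [lt_of_mul_lt_mul_left this hb.le]
  · rintro ⟨k, ⟨hk₀, hk⟩, rfl⟩
    exact ⟨by positivity, by linarith [(hle_floor k).1 hk], hsol.symm.subset ⟨k, rfl⟩⟩

theorem ncard_setOf_nonneg_add_mul_eq {a b x₀ y₀ n : ℤ} (ha : 0 < a) (hb : 0 < b)
    (hcop : IsCoprime a b) (hx₀ : 0 ≤ x₀) (hx₀b : x₀ < b) (h₀ : a * x₀ + b * y₀ = n) :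
    {xy : ℤ × ℤ | 0 ≤ xy.1 ∧ 0 ≤ xy.2 ∧ a * xy.1 + b * xy.2 = n}.ncard =
      (⌊(y₀ : ℚ) / a⌋ + 1).toNat := by
  have hinj : Function.Injective fun k : ℤ ↦ (x₀ + b * k, y₀ - a * k) := fun k l hkl ↦
    mul_left_cancel₀ hb.ne' (by linarith [congrArg Prod.fst hkl])
  rw [setOf_nonneg_add_mul_eq ha hb hcop hx₀ hx₀b h₀, Set.ncard_image_of_injective _ hinj,
    ← Finset.coe_Icc, Set.ncard_coe_finset, Int.card_Icc, sub_zero]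

/-- Popoviciu's formula: for coprime positive integers `a, b` and a positive integer `n`,
the number of nonnegative integer solutions `(x, y)` of `ax + by = n` equals
`n/(ab) - {n a⁻¹ / b} - {n b⁻¹ / a} + 1`. -/
theorem stmt16 (a b : ℤ) (ha : 0 < a) (hb : 0 < b) (hcop : IsCoprime a b) :
    ∀ n : ℤ, 0 < n → ∀ ainv binv : ℤ,
      a * ainv ≡ 1 [ZMOD b] → b * binv ≡ 1 [ZMOD a] →
      (({xy : ℤ × ℤ | 0 ≤ xy.1 ∧ 0 ≤ xy.2 ∧ a * xy.1 + b * xy.2 = n}.ncard : ℚ)) =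
        ((n : ℚ) / ((a * b : ℤ) : ℚ))
          - Int.fract (((n * ainv : ℤ) : ℚ) / (b : ℚ))
          - Int.fract (((n * binv : ℤ) : ℚ) / (a : ℚ)) + 1 := by
  intro n hn ainv binv hainv hbinv
  obtain ⟨x₀, ⟨hx₀, hx₀b⟩, y₀, h₀⟩ := hcop.exists_mem_Ico_add_mul_eq hb n
  have hfloor : -1 ≤ ⌊(y₀ : ℚ) / a⌋ := by
    have : b * (-a) < b * y₀ := by nlinarith
    rw [Int.le_floor, le_div_iff₀ (by exact_mod_cast ha)]
    exact_mod_cast (by linarith [lt_of_mul_lt_mul_left this hb.le] : -1 * a ≤ y₀)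
  have hcount : ({xy : ℤ × ℤ | 0 ≤ xy.1 ∧ 0 ≤ xy.2 ∧ a * xy.1 + b * xy.2 = n}.ncard : ℤ) =
      ⌊(y₀ : ℚ) / a⌋ + 1 :=
    (congrArg _ (ncard_setOf_nonneg_add_mul_eq ha hb hcop hx₀ hx₀b h₀)).trans
      (Int.toNat_of_nonneg (by omega))
  have hfract_x₀ : Int.fract ((x₀ : ℚ) / b) = x₀ / b :=
    Int.fract_eq_self.2
      ⟨by positivity, (div_lt_one (by exact_mod_cast hb)).2 (by exact_mod_cast hx₀b)⟩
  have hsplit : (n : ℚ) / ((a * b : ℤ) : ℚ) = x₀ / b + y₀ / a := by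
    rw [← h₀]; push_cast; field_simp
  rw [← Int.fract_intCast_div_eq_of_modEq (modEq_mul_inv_of_add_mul_eq hainv h₀),
    ← Int.fract_intCast_div_eq_of_modEq (modEq_mul_inv_of_add_mul_eq hbinv
      (by linarith [h₀] : b * y₀ + a * x₀ = n)),
    hfract_x₀, hsplit, ← Int.cast_natCast, hcount]
  push_cast
  linarith [Int.floor_add_fract ((y₀ : ℚ) / a)]
end

section
/- Let V(n) be an r × d matrix and c(n) an r × 1 column vector with integer-polynomial entries, and for a positive integer n let P(n) = {x ∈ ℝ^d : V(n)x ≥ c(n)}, assumed to be a bounded polytope for all sufficiently large n. For a d-element subset I of {1, …, r} for which the rows {f_i(n) : i ∈ I} of V(n) are linearly independent, let v_I(n) denote the unique solution of the system ⟨f_i(n), x⟩ = c_i(n), i ∈ I. Then there exist an integer N and a fixed collection 𝒮 of d-element subsets of {1, …, r} such that for all n ≥ N: for every I ∈ 𝒮 the rows indexed by I are linearly independent and v_I(n) satisfies ⟨f_j(n), v_I(n)⟩ ≥ c_j(n) for all j (so v_I(n) is a vertex of P(n)), and the vertex set of P(n) is exactly {v_I(n) : I ∈ 𝒮}. Moreover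 each coordinate of each v_I(n) is a rational function of n. -/
/-- The polyhedron `{x ∈ ℝ^d : V(n) x ≥ c(n)}` for integer-polynomial data `V`, `c`. -/
def polySet (r d : ℕ) (V : Fin r → Fin d → Polynomial ℤ) (c : Fin r → Polynomial ℤ)
    (n : ℤ) : Set (Fin d → ℝ) :=
  {x | ∀ i : Fin r, (((c i).eval n : ℤ) : ℝ) ≤ ∑ j, (((V i j).eval n : ℤ) : ℝ) * x j}

/-!
A point of `P(n)` is a vertex iff the constraints tight at it have rank `d`, i.e. iff it lies in
`P(n)` and is the solution of a nonsingular `d × d` subsystem `I`. By Cramer's rule that solution is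
`adj(V_I) c_I / det V_I` evaluated at `n`, and it lies in `P(n)` iff the integer polynomials
`det V_I · ⟨f_j, adj(V_I) c_I⟩ - (det V_I)² c_j` are nonnegative at `n`. An integer polynomial
eventually has the sign of its leading coefficient, so for `n ≫ 0` nonsingularity and feasibility
of each of the finitely many subsystems no longer depend on `n`.
-/

open Filter Matrix Polynomial Topology

namespace Polynomial

theorem eventually_pos_eval_of_leadingCoeff_pos {P : ℝ[X]} (h : 0 < P.leadingCoeff) :
    ∀ᶠ x in atTop, 0 < P.eval x := by
  obtain ⟨a, ha⟩ := eventually_atTop.1 <|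
    eventually_atTop_not_isRoot P (leadingCoeff_ne_zero.1 h.ne')
  filter_upwards [eventually_ge_atTop a] with x hx
  exact zero_lt_eval_of_roots_lt_of_leadingCoeff_nonneg
    (fun y hy => (lt_of_not_ge fun hay => ha y hay hy).trans_le hx) h.le

theorem eventually_sign_eval_eq (p : ℤ[X]) :
    ∀ᶠ n : ℤ in atTop, SignType.sign (p.eval n) = SignType.sign p.leadingCoeff := by
  wlog hp : 0 ≤ p.leadingCoeff generalizing p
  · filter_upwards [this (-p) (by simpa using (not_le.1 hp).le)] with n hn
    simpa [Left.sign_neg] using hn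
  rcases hp.eq_or_lt with h0 | hpos
  · simp [leadingCoeff_eq_zero.1 h0.symm]
  have hP : 0 < (p.map (Int.castRingHom ℝ)).leadingCoeff := by
    simpa [leadingCoeff_map_of_injective (Int.castRingHom ℝ).injective_int] using hpos
  filter_upwards [tendsto_intCast_atTop_atTop.eventually
    (eventually_pos_eval_of_leadingCoeff_pos hP)] with n hn
  rw [eval_intCast_map, eq_intCast, Int.cast_pos, Int.cast_id] at hn
  rw [sign_pos hpos, sign_pos hn]

end Polynomial

section Rows

variable {ι m K : Type*} [Fintype m] [Field K] {W : ι → m → K}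

theorem exists_linearIndepOn_card_eq_iff [Finite ι] (s : Set ι) :
    (∃ I : Finset ι, ↑I ⊆ s ∧ I.card = Fintype.card m ∧ LinearIndepOn K W ↑I) ↔
      ∀ y, (∀ i ∈ s, W i ⬝ᵥ y = 0) → y = 0 := by
  have hker : ∀ (t : Set ι) (y : m → K), (∀ i ∈ t, W i ⬝ᵥ y = 0) →
      Submodule.span K (W '' t) ≤ LinearMap.ker ((dotProductBilin K K).flip y) := by
    intro t y hy
    rw [Submodule.span_le]
    rintro _ ⟨i, hi, rfl⟩
    exact hy i hi
  constructor
  · rintro ⟨I, hIs, hcard, hli⟩ y hy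
    have hspan : Submodule.span K (W '' ↑I) = ⊤ := by
      rw [Set.image_eq_range]
      refine hli.span_eq_top_of_card_eq_finrank' ?_
      simp [hcard]
    have hall := hker _ y fun i hi => hy i (hIs hi)
    rw [hspan, top_le_iff, LinearMap.ker_eq_top] at hall
    exact (dotProduct_eq_zero _ fun w => by
      simpa [dotProduct_comm] using LinearMap.congr_fun hall w)
  · intro hs
    obtain ⟨B, hBs, -, hsB, hli⟩ :=
      exists_linearIndepOn_extension (linearIndepOn_empty K W) (Set.empty_subset s)
    obtain ⟨I, rfl⟩ : ∃ I : Finset ι, ↑I = B := ⟨B.toFinite.toFinset, by simp⟩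
    refine ⟨I, hBs, le_antisymm ?_ ?_, hli⟩
    · simpa using hli.fintype_card_le_finrank
    · have hinj : Function.Injective (Matrix.of fun i : (I : Set ι) => W i).mulVecLin := by
        refine (injective_iff_map_eq_zero _).2 fun y hy => hs y fun i hi => ?_
        have hI := hker _ y fun i hi => congr_fun hy ⟨i, hi⟩
        exact hI (hsB ⟨i, hi, rfl⟩)
      simpa using LinearMap.finrank_le_finrank_of_injective hinj

end Rows

section Polyhedron

variable {ι m : Type*} [Fintype m]

def polyhedron (W : ι → m → ℝ) (b : ι → ℝ) : Set (m → ℝ) :=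
  {x | ∀ i, b i ≤ W i ⬝ᵥ x}

variable {W : ι → m → ℝ} {b : ι → ℝ} {x : m → ℝ}

theorem convex_polyhedron (W : ι → m → ℝ) (b : ι → ℝ) : Convex ℝ (polyhedron W b) := by
  intro x hx y hy s t hs ht hst i
  have hxi : b i ≤ W i ⬝ᵥ x := hx i
  have hyi : b i ≤ W i ⬝ᵥ y := hy i
  rw [dotProduct_add, dotProduct_smul, dotProduct_smul, smul_eq_mul, smul_eq_mul]
  have hbi : b i = s * b i + t * b i := by rw [← add_mul, hst, one_mul]
  nlinarith [mul_le_mul_of_nonneg_left hxi hs, mul_le_mul_of_nonneg_left hyi ht]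

theorem mem_extremePoints_polyhedron_iff [Finite ι] :
    x ∈ (polyhedron W b).extremePoints ℝ ↔
      x ∈ polyhedron W b ∧ ∀ y, (∀ i, W i ⬝ᵥ x = b i → W i ⬝ᵥ y = 0) → y = 0 := by
  refine ⟨fun hx => ⟨hx.1, fun y hy => ?_⟩, fun ⟨hx, hker⟩ => ⟨hx, ?_⟩⟩
  · by_contra hy0
    have hmove : ∀ᶠ t in 𝓝 (0 : ℝ), x + t • y ∈ polyhedron W b := by
      refine eventually_all.2 fun i => ?_
      simp only [dotProduct_add, dotProduct_smul, smul_eq_mul]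
      by_cases hi : W i ⬝ᵥ x = b i
      · simp [hi, hy i hi]
      have hcont : Tendsto (fun t : ℝ => W i ⬝ᵥ x + t * (W i ⬝ᵥ y)) (𝓝 0)
          (𝓝 (W i ⬝ᵥ x + 0 * (W i ⬝ᵥ y))) :=
        tendsto_const_nhds.add (tendsto_id.mul tendsto_const_nhds)
      rw [zero_mul, add_zero] at hcont
      exact (hcont.eventually_const_lt ((hx.1 i).lt_of_ne (Ne.symm hi))).mono
        fun t ht => ht.le
    have hmove' : ∀ᶠ t in 𝓝 (0 : ℝ), x + (-t) • y ∈ polyhedron W b :=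
      (continuous_neg.tendsto' 0 0 neg_zero).eventually hmove
    obtain ⟨t, ⟨hpos, hneg⟩, ht⟩ :=
      (((hmove.and hmove').filter_mono nhdsWithin_le_nhds).and
        (self_mem_nhdsWithin (s := {(0 : ℝ)}ᶜ))).exists
    have hmid : x ∈ openSegment ℝ (x + t • y) (x + (-t) • y) :=
      ⟨1 / 2, 1 / 2, by norm_num, by norm_num, by norm_num, by module⟩
    have hty : t • y = 0 := by simpa using hx.2 hpos hneg hmid
    exact (smul_eq_zero.1 hty).elim ht hy0
  · rintro x₁ hx₁ x₂ hx₂ ⟨s, t, hs, ht, hst, rfl⟩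
    rw [← sub_eq_zero]
    refine hker _ fun i hi => ?_
    have h₁ : b i ≤ W i ⬝ᵥ x₁ := hx₁ i
    have h₂ : b i ≤ W i ⬝ᵥ x₂ := hx₂ i
    rw [dotProduct_add, dotProduct_smul, dotProduct_smul, smul_eq_mul, smul_eq_mul] at hi
    have hsum : s * (W i ⬝ᵥ x₁ - b i) + t * (W i ⬝ᵥ x₂ - b i) = 0 := by
      linear_combination hi - b i * hst
    have htight : W i ⬝ᵥ x₁ = b i := by
      nlinarith [mul_nonneg hs.le (sub_nonneg.2 h₁), mul_nonneg ht.le (sub_nonneg.2 h₂)]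
    rw [dotProduct_sub, htight, dotProduct_add, dotProduct_smul, dotProduct_smul, smul_eq_mul,
      smul_eq_mul, hi, sub_self]

theorem mem_extremePoints_polyhedron_iff_exists_basis [Finite ι] :
    x ∈ (polyhedron W b).extremePoints ℝ ↔ x ∈ polyhedron W b ∧
      ∃ I : Finset ι, I.card = Fintype.card m ∧ LinearIndepOn ℝ W ↑I ∧
        ∀ i ∈ I, W i ⬝ᵥ x = b i := by
  rw [mem_extremePoints_polyhedron_iff]
  refine and_congr_right fun _ =>
    (exists_linearIndepOn_card_eq_iff {i | W i ⬝ᵥ x = b i}).symm.trans ?_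
  simp only [Set.subset_def, Finset.mem_coe, Set.mem_ofPred_eq]
  tauto

end Polyhedron

section Specialization

variable {R K m : Type*} [CommRing R] [Field K] [Fintype m] [DecidableEq m]
  (φ : R →+* K) (A : Matrix m m R)

theorem linearIndependent_rows_map_iff :
    LinearIndependent K (fun a => A.map φ a) ↔ φ A.det ≠ 0 := by
  refine (linearIndependent_rows_iff_isUnit (A := A.map φ)).trans ?_
  rw [isUnit_iff_isUnit_det, ← RingHom.mapMatrix_apply, ← RingHom.map_det, isUnit_iff_ne_zero]

theorem map_cramer (b : m → R) : φ ∘ cramer A b = cramer (A.map φ) (φ ∘ b) := by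
  funext j
  simp only [Function.comp_apply, cramer_eq_adjugate_mulVec, RingHom.map_mulVec]
  rw [← RingHom.mapMatrix_apply, ← RingHom.mapMatrix_apply, RingHom.map_adjugate]

theorem map_mulVec_eq_iff (b : m → R) (h : φ A.det ≠ 0) (x : m → K) :
    A.map φ *ᵥ x = φ ∘ b ↔ x = fun j => φ (cramer A b j) / φ A.det := by
  have hdet : (A.map φ).det = φ A.det := (RingHom.map_det φ A).symm
  have hsol : A.map φ *ᵥ (fun j => φ (cramer A b j) / φ A.det) = φ ∘ b := by
    have : (fun j => φ (cramer A b j) / φ A.det) = (φ A.det)⁻¹ • cramer (A.map φ) (φ ∘ b) := by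
      rw [← map_cramer]; funext j; simp [div_eq_inv_mul]
    rw [this, mulVec_smul, mulVec_cramer, hdet, inv_smul_smul₀ h]
  rw [← hsol]
  exact (mulVec_injective_iff_isUnit.2
    ((isUnit_iff_isUnit_det _).2 (hdet ▸ isUnit_iff_ne_zero.2 h))).eq_iff

end Specialization

theorem map_le_dotProduct_div_iff {R K m : Type*} [CommRing R] [Field K] [LinearOrder K]
    [IsStrictOrderedRing K] [Fintype m] (φ : R →+* K) (w u : m → R) (q t : R) (hq : φ q ≠ 0) :
    φ t ≤ (φ ∘ w) ⬝ᵥ (fun j => φ (u j) / φ q) ↔ 0 ≤ φ (q * (w ⬝ᵥ u) - q ^ 2 * t) := by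
  have hdot : (φ ∘ w) ⬝ᵥ (fun j => φ (u j) / φ q) = φ (w ⬝ᵥ u) / φ q := by
    simp [dotProduct, Finset.sum_div, mul_div_assoc, map_sum]
  have hslack : φ (q * (w ⬝ᵥ u) - q ^ 2 * t) = φ q ^ 2 * (φ (w ⬝ᵥ u) / φ q - φ t) := by
    rw [map_sub, map_mul, map_mul, map_pow]; field_simp
  rw [hdot, hslack, mul_nonneg_iff_of_pos_left (by positivity), sub_nonneg]

namespace polySet

noncomputable def evalReal (n : ℤ) : ℤ[X] →+* ℝ :=
  (Int.castRingHom ℝ).comp (evalRingHom n)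

variable {r d : ℕ} (V : Fin r → Fin d → ℤ[X]) (c : Fin r → ℤ[X])

theorem eq_polyhedron (n : ℤ) :
    polySet r d V c n = polyhedron (fun i j => evalReal n (V i j)) (fun i => evalReal n (c i)) :=
  rfl

theorem convex (n : ℤ) : Convex ℝ (polySet r d V c n) :=
  convex_polyhedron _ _

noncomputable def basisMatrix (I : Finset (Fin r)) (h : I.card = d) :
    Matrix (Fin d) (Fin d) ℤ[X] :=
  Matrix.of fun a => V (I.orderEmbOfFin h a)

/-- The common denominator `det V_I` of the coordinates of `v_I`; junk value `1` unless `#I = d`. -/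
noncomputable def vertexDen (I : Finset (Fin r)) : ℤ[X] :=
  if h : I.card = d then (basisMatrix V I h).det else 1

noncomputable def vertexNum (I : Finset (Fin r)) : Fin d → ℤ[X] :=
  if h : I.card = d then cramer (basisMatrix V I h) (c ∘ I.orderEmbOfFin h) else 0

noncomputable def vertex (I : Finset (Fin r)) (n : ℤ) : Fin d → ℝ :=
  fun j => evalReal n (vertexNum V c I j) / evalReal n (vertexDen V I)

/-- `(det V_I)² (⟨f_j, v_I⟩ - c_j)`, cleared of denominators. -/
noncomputable def vertexSlack (I : Finset (Fin r)) (j : Fin r) : ℤ[X] :=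
  vertexDen V I * (V j ⬝ᵥ vertexNum V c I) - vertexDen V I ^ 2 * c j

variable {V c} {I : Finset (Fin r)} {n : ℤ}

theorem evalReal_ne_zero {p : ℤ[X]} : evalReal n p ≠ 0 ↔ p.eval n ≠ 0 :=
  Int.cast_ne_zero

theorem linearIndepOn_iff_eval_vertexDen_ne_zero (h : I.card = d) :
    LinearIndepOn ℝ (fun i j => evalReal n (V i j)) ↑I ↔ (vertexDen V I).eval n ≠ 0 := by
  rw [vertexDen, dif_pos h, ← evalReal_ne_zero, ← linearIndependent_rows_map_iff]
  exact (linearIndependent_equiv (I.orderIsoOfFin h).toEquiv).symm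

theorem forall_dotProduct_eq_iff_eq_vertex (h : I.card = d) (hden : (vertexDen V I).eval n ≠ 0)
    (x : Fin d → ℝ) :
    (∀ i ∈ I, (fun j => evalReal n (V i j)) ⬝ᵥ x = evalReal n (c i)) ↔
      x = vertex V c I n := by
  rw [vertexDen, dif_pos h, ← evalReal_ne_zero] at hden
  unfold vertex vertexNum vertexDen
  rw [dif_pos h, dif_pos h, ← map_mulVec_eq_iff _ _ _ hden, funext_iff]
  simp_rw [← Finset.mem_coe, ← I.range_orderEmbOfFin h, Set.forall_mem_range]
  rfl

theorem vertex_mem_iff (hden : (vertexDen V I).eval n ≠ 0) :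
    vertex V c I n ∈ polySet r d V c n ↔ ∀ j, 0 ≤ (vertexSlack V c I j).eval n := by
  refine forall_congr' fun j => ?_
  rw [← Int.cast_nonneg_iff (R := ℝ)]
  exact map_le_dotProduct_div_iff (evalReal n) (V j) _ _ (c j) (evalReal_ne_zero.2 hden)

theorem mem_extremePoints_iff (x : Fin d → ℝ) :
    x ∈ (polySet r d V c n).extremePoints ℝ ↔
      ∃ I : Finset (Fin r), I.card = d ∧ (vertexDen V I).eval n ≠ 0 ∧
        (∀ j, 0 ≤ (vertexSlack V c I j).eval n) ∧ x = vertex V c I n := by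
  rw [eq_polyhedron, mem_extremePoints_polyhedron_iff_exists_basis, Fintype.card_fin]
  constructor
  · rintro ⟨hx, I, h, hli, hact⟩
    have hden := (linearIndepOn_iff_eval_vertexDen_ne_zero h).1 hli
    have hxv := (forall_dotProduct_eq_iff_eq_vertex h hden x).1 hact
    exact ⟨I, h, hden, (vertex_mem_iff hden).1 (hxv ▸ hx), hxv⟩
  · rintro ⟨I, h, hden, hslack, rfl⟩
    exact ⟨(vertex_mem_iff hden).2 hslack, I, h,
      (linearIndepOn_iff_eval_vertexDen_ne_zero h).2 hden,
      (forall_dotProduct_eq_iff_eq_vertex h hden _).2 rfl⟩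

end polySet

theorem stmt17_general (r d : ℕ) (V : Fin r → Fin d → Polynomial ℤ) (c : Fin r → Polynomial ℤ) :
    ∃ (N : ℤ) (𝒮 : Finset (Finset (Fin r))) (v : Finset (Fin r) → ℤ → Fin d → ℝ)
      (num den : Finset (Fin r) → Fin d → Polynomial ℤ),
      (∀ I ∈ 𝒮, I.card = d) ∧
      ∀ n : ℤ, N ≤ n →
        (∀ I ∈ 𝒮,
          -- the rows indexed by `I` are linearly independent
          LinearIndependent ℝ
            (fun i : (I : Set (Fin r)) => fun j : Fin d => (((V i j).eval n : ℤ) : ℝ)) ∧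
          -- `v_I(n)` is the unique solution of the system `⟨f_i(n), x⟩ = c_i(n)`, `i ∈ I`
          (∀ x : Fin d → ℝ,
            (∀ i ∈ I, ∑ j, (((V i j).eval n : ℤ) : ℝ) * x j = (((c i).eval n : ℤ) : ℝ))
              ↔ x = v I n) ∧
          -- `v_I(n)` satisfies all the inequalities, i.e. lies in `P(n)`
          v I n ∈ polySet r d V c n ∧
          -- each coordinate of `v_I(n)` is a rational function of `n`
          (∀ j : Fin d, ((den I j).eval n ≠ 0 ∧
            v I n j = (((num I j).eval n : ℤ) : ℝ) / (((den I j).eval n : ℤ) : ℝ)))) ∧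
        -- the vertex set of `P(n)` is exactly `{v_I(n) : I ∈ 𝒮}`
        (∀ x : Fin d → ℝ,
          (x ∈ polySet r d V c n ∧ x ∉ convexHull ℝ (polySet r d V c n \ {x}))
            ↔ ∃ I ∈ 𝒮, x = v I n) := by
  classical
  obtain ⟨N, hN⟩ := eventually_atTop.1 <| eventually_all.2 fun I =>
    (eventually_sign_eval_eq (polySet.vertexDen V I)).and <|
      eventually_all.2 fun j => eventually_sign_eval_eq (polySet.vertexSlack V c I j)
  let 𝒮 := (Finset.univ.powersetCard d).filter fun I =>
    polySet.vertexDen V I ≠ 0 ∧ ∀ j, 0 ≤ (polySet.vertexSlack V c I j).leadingCoeff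
  refine ⟨N, 𝒮, polySet.vertex V c, polySet.vertexNum V c, fun I _ => polySet.vertexDen V I,
    fun I hI => Finset.mem_powersetCard_univ.1 (Finset.mem_filter.1 hI).1, fun n hn => ?_⟩
  have hmem (I) : I ∈ 𝒮 ↔ I.card = d ∧ (polySet.vertexDen V I).eval n ≠ 0 ∧
      ∀ j, 0 ≤ (polySet.vertexSlack V c I j).eval n := by
    obtain ⟨hden, hslack⟩ := hN n hn I
    rw [Finset.mem_filter, Finset.mem_powersetCard_univ, ← leadingCoeff_ne_zero, ← sign_ne_zero,
      ← hden, sign_ne_zero]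
    simp only [← sign_nonneg_iff (a := leadingCoeff _), ← hslack, sign_nonneg_iff]
  refine ⟨fun I hI => ?_, fun x => ?_⟩
  · obtain ⟨h, hden, hslack⟩ := (hmem I).1 hI
    exact ⟨(polySet.linearIndepOn_iff_eval_vertexDen_ne_zero h).2 hden,
      polySet.forall_dotProduct_eq_iff_eq_vertex h hden, (polySet.vertex_mem_iff hden).2 hslack,
      fun _ => ⟨hden, rfl⟩⟩
  · rw [← Set.mem_sdiff,
      ← (polySet.convex V c n).mem_extremePoints_iff_mem_sdiff_convexHull_sdiff,
      polySet.mem_extremePoints_iff]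
    simp only [hmem, and_assoc]

/-- For `n ≫ 0`, the combinatorics of the parametrized polytope
`P(n) = {x : V(n)x ≥ c(n)}` stabilizes: there is a fixed collection `𝒮` of `d`-element
subsets `I` of the rows such that the rows indexed by `I` are linearly independent, the
corresponding system `⟨f_i(n), x⟩ = c_i(n)` (`i ∈ I`) has a unique solution `v_I(n)`,
which lies in `P(n)`, and the vertex set of `P(n)` is exactly `{v_I(n) : I ∈ 𝒮}`;
moreover each coordinate of `v_I(n)` is a rational function of `n`. -/
theorem stmt17 (r d : ℕ) (V : Fin r → Fin d → Polynomial ℤ) (c : Fin r → Polynomial ℤ)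
    (hbdd : ∃ N : ℤ, ∀ n : ℤ, N ≤ n → Bornology.IsBounded (polySet r d V c n)) :
    ∃ (N : ℤ) (𝒮 : Finset (Finset (Fin r))) (v : Finset (Fin r) → ℤ → Fin d → ℝ)
      (num den : Finset (Fin r) → Fin d → Polynomial ℤ),
      (∀ I ∈ 𝒮, I.card = d) ∧
      ∀ n : ℤ, N ≤ n →
        (∀ I ∈ 𝒮,
          -- the rows indexed by `I` are linearly independent
          LinearIndependent ℝ
            (fun i : (I : Set (Fin r)) => fun j : Fin d => (((V i j).eval n : ℤ) : ℝ)) ∧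
          -- `v_I(n)` is the unique solution of the system `⟨f_i(n), x⟩ = c_i(n)`, `i ∈ I`
          (∀ x : Fin d → ℝ,
            (∀ i ∈ I, ∑ j, (((V i j).eval n : ℤ) : ℝ) * x j = (((c i).eval n : ℤ) : ℝ))
              ↔ x = v I n) ∧
          -- `v_I(n)` satisfies all the inequalities, i.e. lies in `P(n)`
          v I n ∈ polySet r d V c n ∧
          -- each coordinate of `v_I(n)` is a rational function of `n`
          (∀ j : Fin d, ((den I j).eval n ≠ 0 ∧
            v I n j = (((num I j).eval n : ℤ) : ℝ) / (((den I j).eval n : ℤ) : ℝ)))) ∧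
        -- the vertex set of `P(n)` is exactly `{v_I(n) : I ∈ 𝒮}`
        (∀ x : Fin d → ℝ,
          (x ∈ polySet r d V c n ∧ x ∉ convexHull ℝ (polySet r d V c n \ {x}))
            ↔ ∃ I ∈ 𝒮, x = v I n) :=
  stmt17_general r d V c
end
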